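/- The space of harmonic noncommutative polynomials homogeneous of degree 3 in two variables x_1, x_2 is exactly the two-dimensional real span of x_2^3 − x_1^2·x_2 − x_2·x_1^2 − x_1·x_2·x_1 and −x_1^3 + x_1·x_2^2 + x_2^2·x_1 + x_2·x_1·x_2. -/

import Mathlib

noncomputable section

/-- Variables: `some i` is `xᵢ`, `none` is the direction variable `h`. -/
abbrev Var (g : ℕ) := Option (Fin g)

/-- Noncommutative polynomials `ℝ⟨x₁,…,x_g,h⟩`. -/
abbrev NC (g : ℕ) := MonoidAlgebra ℝ (FreeMonoid (Var g))

/-- The monomial corresponding to a word. -/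
def mono (g : ℕ) (w : List (Var g)) : NC g :=
  MonoidAlgebra.of ℝ (FreeMonoid (Var g)) (FreeMonoid.ofList w)

/-- The generator `xᵢ`. -/
def Xv (g : ℕ) (i : Fin g) : NC g := mono g [some i]

/-- The direction variable `h`. -/
def Hv (g : ℕ) : NC g := mono g [none]

/-- Directional derivative of a word in `xᵢ` in direction `h`: sum of the
terms obtained by replacing one occurrence of `xᵢ` by `h`. -/
def wordD (g : ℕ) (i : Fin g) : List (Var g) → NC g
  | [] => 0
  | a :: w =>
      (if a = some i then mono g (none :: w) else 0) + mono g [a] * wordD g i w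

/-- Directional derivative `D[p, xᵢ, h]`, extended linearly from words. -/
def D (g : ℕ) (i : Fin g) (p : NC g) : NC g :=
  Finsupp.sum p.coeff fun w c => c • wordD g i (FreeMonoid.toList w)

/-- The noncommutative Laplacian `Lap[p,h] := ∑ᵢ D[D[p,xᵢ,h],xᵢ,h]`. -/
def Lap (g : ℕ) (p : NC g) : NC g := ∑ i : Fin g, D g i (D g i p)

/-- The transpose: linear anti-automorphism reversing words and fixing generators. -/
def transp (g : ℕ) (p : NC g) : NC g :=
  MonoidAlgebra.ofCoeff (Finsupp.mapDomain (fun w => FreeMonoid.ofList (FreeMonoid.toList w).reverse) p.coeff)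

/-- Evaluation of a polynomial at a tuple of matrices (one for each variable). -/
def eval (g n : ℕ) (M : Var g → Matrix (Fin n) (Fin n) ℝ) (p : NC g) :
    Matrix (Fin n) (Fin n) ℝ :=
  Finsupp.sum p.coeff fun w c => c • ((FreeMonoid.toList w).map M).prod

/-- `p` is a polynomial in `x₁,…,x_g` only (the variable `h` does not occur). -/
def NoH (g : ℕ) (p : NC g) : Prop :=
  ∀ w ∈ p.coeff.support, none ∉ FreeMonoid.toList w

/-- `p` is a homogeneous polynomial of degree `d` in the variables `x₁,…,x_g`. -/
def HomogX (g : ℕ) (d : ℕ) (p : NC g) : Prop :=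
  ∀ w ∈ p.coeff.support, none ∉ FreeMonoid.toList w ∧ (FreeMonoid.toList w).length = d



/-!
Write a homogeneous cubic as `∑ c i j k • xᵢxⱼxₖ`. Each `D[·, x_l, h]` replaces one occurrence of
`x_l` by `h`, so the Laplacian of `xᵢxⱼxₖ` is twice the sum of the words obtained by replacing a
pair of equal letters by `hh`. Collecting terms, the Laplacian is
`2 ∑ₖ ((∑ₗ c l l k) hhxₖ + (∑ₗ c l k l) hxₖh + (∑ₗ c k l l) xₖhh)`, so a cubic is harmonic exactly
when all three partial traces of its coefficient tensor vanish. In two variables these are six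
independent linear conditions on eight coefficients, and the two given polynomials span the
solutions.
-/

instance {α : Type*} [DecidableEq α] : DecidableEq (FreeMonoid α) :=
  inferInstanceAs (DecidableEq (List α))

lemma List.exists_eq_some_three {α : Type*} {l : List (Option α)} (hnone : none ∉ l)
    (hlen : l.length = 3) : ∃ a b c, l = [some a, some b, some c] := by
  rcases l with _ | ⟨_ | a, _ | ⟨_ | b, _ | ⟨_ | c, _ | _⟩⟩⟩ <;> simp_all

def TracesVanish {g : ℕ} (c : Fin g → Fin g → Fin g → ℝ) : Prop :=
  ∀ k, ∑ l, c l l k = 0 ∧ ∑ l, c l k l = 0 ∧ ∑ l, c k l l = 0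

section

variable (g : ℕ)

lemma mono_eq_single (w : List (Var g)) :
    mono g w = MonoidAlgebra.single (FreeMonoid.ofList w) 1 := by
  simp [mono, MonoidAlgebra.of_apply]

lemma mono_mul (u v : List (Var g)) : mono g u * mono g v = mono g (u ++ v) := by
  simp [mono]

lemma coeff_mono (w : List (Var g)) (v : FreeMonoid (Var g)) :
    (mono g w).coeff v = if FreeMonoid.ofList w = v then 1 else 0 := by
  rw [mono_eq_single]; exact Finsupp.single_apply

def Dₗ (i : Fin g) : NC g →ₗ[ℝ] NC g where
  toFun := D g i
  map_add' p q := Finsupp.sum_add_index' (by simp) fun _ _ _ => add_smul _ _ _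
  map_smul' c p := by
    simp only [D, MonoidAlgebra.coeff_smul, RingHom.id_apply]
    rw [Finsupp.sum_smul_index' (by simp), Finsupp.smul_sum]
    simp [mul_smul]

lemma Dₗ_apply (i : Fin g) (p : NC g) : Dₗ g i p = D g i p := rfl

lemma D_add (i : Fin g) (p q : NC g) : D g i (p + q) = D g i p + D g i q :=
  (Dₗ g i).map_add p q

lemma D_zero (i : Fin g) : D g i 0 = 0 := (Dₗ g i).map_zero

lemma D_mono (i : Fin g) (w : List (Var g)) : D g i (mono g w) = wordD g i w := by
  simp [D, mono_eq_single, Finsupp.sum_single_index]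

lemma D_mono_nil (i : Fin g) : D g i (mono g []) = 0 := by
  simp only [D_mono, wordD]

lemma D_mono_cons (i : Fin g) (a : Var g) (w : List (Var g)) :
    D g i (mono g (a :: w)) =
      (if a = some i then mono g (none :: w) else 0) + mono g [a] * D g i (mono g w) := by
  simp only [D_mono, wordD]

lemma D_mono_three (i j k l : Fin g) :
    D g l (mono g [some i, some j, some k]) =
      (if i = l then mono g [none, some j, some k] else 0) +
      (if j = l then mono g [some i, none, some k] else 0) +
      (if k = l then mono g [some i, some j, none] else 0) := by
  simp [D_mono_cons, D_mono_nil, mul_add, mul_ite, mono_mul, add_assoc]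

lemma lap_mono_three (i j k : Fin g) :
    Lap g (mono g [some i, some j, some k]) =
      (2 : ℝ) • ((if i = j then mono g [none, none, some k] else 0) +
        (if i = k then mono g [none, some j, none] else 0) +
        (if j = k then mono g [some i, none, none] else 0)) := by
  simp only [Lap, D_mono_three, D_add, apply_ite (D g _), D_zero]
  simp [D_mono_cons, D_mono_nil, mul_add, mul_ite, mono_mul, Finset.sum_add_distrib,
    eq_comm (b := i), eq_comm (a := k)]
  split_ifs <;> module

def Lapₗ : NC g →ₗ[ℝ] NC g := ∑ i, Dₗ g i ∘ₗ Dₗ g i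

lemma Lapₗ_apply (p : NC g) : Lapₗ g p = Lap g p := by
  simp [Lapₗ, Lap, Dₗ_apply]

def cubic (c : Fin g → Fin g → Fin g → ℝ) : NC g :=
  ∑ i, ∑ j, ∑ k, c i j k • mono g [some i, some j, some k]

lemma lap_cubic (c : Fin g → Fin g → Fin g → ℝ) :
    Lap g (cubic g c) = (2 : ℝ) • ∑ k,
      ((∑ l, c l l k) • mono g [none, none, some k] +
        (∑ l, c l k l) • mono g [none, some k, none] +
        (∑ l, c k l l) • mono g [some k, none, none]) := by
  rw [← Lapₗ_apply]
  simp only [cubic, map_sum, map_smul, Lapₗ_apply, lap_mono_three, smul_comm (c _ _ _) (2 : ℝ),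
    ← Finset.smul_sum]
  congr 1
  simp only [smul_add, smul_ite, smul_zero, Finset.sum_add_distrib, Finset.sum_smul,
    Finset.sum_ite_irrel, Finset.sum_const_zero, Finset.sum_ite_eq, Finset.mem_univ, if_true]
  congr 2 <;> exact Finset.sum_comm

lemma lap_cubic_eq_zero_iff (c : Fin g → Fin g → Fin g → ℝ) :
    Lap g (cubic g c) = 0 ↔ TracesVanish c := by
  refine ⟨fun h k => ?_, fun h => by simp [lap_cubic, h _]⟩
  have coeff_eq (w : List (Var g)) := congrArg (·.coeff (FreeMonoid.ofList w)) h
  simp only [lap_cubic, MonoidAlgebra.coeff_smul, MonoidAlgebra.coeff_sum, MonoidAlgebra.coeff_add,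
    Finsupp.smul_apply, Finsupp.coe_finsetSum, Finset.sum_apply, Finsupp.add_apply, coeff_mono,
    Equiv.apply_eq_iff_eq, MonoidAlgebra.coeff_zero, Finsupp.coe_zero, Pi.zero_apply] at coeff_eq
  exact ⟨by simpa using coeff_eq [none, none, some k], by simpa using coeff_eq [none, some k, none],
    by simpa using coeff_eq [some k, none, none]⟩

lemma coeff_cubic (c : Fin g → Fin g → Fin g → ℝ) (w : FreeMonoid (Var g)) :
    (cubic g c).coeff w =
      ∑ i, ∑ j, ∑ k, if FreeMonoid.ofList [some i, some j, some k] = w then c i j k else 0 := by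
  simp [cubic, coeff_mono]

lemma coeff_cubic_ofList (c : Fin g → Fin g → Fin g → ℝ) (i j k : Fin g) :
    (cubic g c).coeff (FreeMonoid.ofList [some i, some j, some k]) = c i j k := by
  simp only [coeff_cubic, Equiv.apply_eq_iff_eq, List.cons.injEq, Option.some.injEq, and_true,
    ite_and]
  simp [Finset.sum_ite_eq']

lemma coeff_cubic_eq_zero (c : Fin g → Fin g → Fin g → ℝ) (w : FreeMonoid (Var g))
    (hw : ∀ i j k, FreeMonoid.ofList [some i, some j, some k] ≠ w) : (cubic g c).coeff w = 0 := by
  simp only [coeff_cubic, hw, if_false, Finset.sum_const_zero]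

lemma homogX_three_iff (p : NC g) : HomogX g 3 p ↔ ∃ c, p = cubic g c := by
  constructor
  · intro hp
    refine ⟨fun i j k => p.coeff (FreeMonoid.ofList [some i, some j, some k]), ?_⟩
    ext w
    by_cases hw : ∃ i j k, FreeMonoid.ofList [some i, some j, some k] = w
    · obtain ⟨i, j, k, rfl⟩ := hw
      rw [coeff_cubic_ofList]
    · push Not at hw
      rw [coeff_cubic_eq_zero g _ w hw, ← Finsupp.notMem_support_iff]
      intro hmem
      obtain ⟨i, j, k, hijk⟩ := List.exists_eq_some_three (hp w hmem).1 (hp w hmem).2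
      exact hw i j k hijk.symm
  · rintro ⟨c, rfl⟩ w hw
    by_cases h : ∃ i j k, FreeMonoid.ofList [some i, some j, some k] = w
    · obtain ⟨i, j, k, rfl⟩ := h
      simp
    · push Not at h
      exact absurd (coeff_cubic_eq_zero g c w h) (Finsupp.mem_support_iff.mp hw)

lemma homogX_three_and_lap_eq_zero_iff (p : NC g) :
    (HomogX g 3 p ∧ Lap g p = 0) ↔ ∃ c, TracesVanish c ∧ p = cubic g c := by
  rw [homogX_three_iff]
  constructor
  · rintro ⟨⟨c, rfl⟩, hlap⟩
    exact ⟨c, (lap_cubic_eq_zero_iff g c).mp hlap, rfl⟩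
  · rintro ⟨c, hc, rfl⟩
    exact ⟨⟨c, rfl⟩, (lap_cubic_eq_zero_iff g c).mpr hc⟩

end

/-- the harmonic homogeneous degree-3 polynomials in two variables
are exactly the span of the two listed polynomials. -/
theorem harmonic_deg3_classification (p : NC 2) :
    (HomogX 2 3 p ∧ Lap 2 p = 0) ↔
    ∃ a b : ℝ,
      p = a • (Xv 2 1 ^ 3 - Xv 2 0 ^ 2 * Xv 2 1 - Xv 2 1 * Xv 2 0 ^ 2
                 - Xv 2 0 * Xv 2 1 * Xv 2 0)
        + b • (-(Xv 2 0 ^ 3) + Xv 2 0 * Xv 2 1 ^ 2 + Xv 2 1 ^ 2 * Xv 2 0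
                 + Xv 2 1 * Xv 2 0 * Xv 2 1) := by
  simp only [homogX_three_and_lap_eq_zero_iff, Xv, pow_succ, pow_zero, one_mul, mono_mul,
    List.cons_append, List.nil_append]
  constructor
  · rintro ⟨c, hc, rfl⟩
    have traces₀ := hc 0
    have traces₁ := hc 1
    simp only [Fin.sum_univ_two] at traces₀ traces₁
    refine ⟨c 1 1 1, -c 0 0 0, ?_⟩
    simp only [cubic, Fin.sum_univ_two]
    match_scalars <;> linarith
  · rintro ⟨a, b, rfl⟩
    refine ⟨![![![-b, -a], ![-a, b]], ![![-a, b], ![b, a]]], ?_, ?_⟩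
    · simp [TracesVanish, Fin.forall_fin_two, Fin.sum_univ_two]
    · simp [cubic, Fin.sum_univ_two]
      module
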